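/- arXiv:2402.04231 — 3 statements merged into one kernel-verified Lean document; each statement's English description precedes it below -/
import Mathlib

section
/- Let q be a prime power and e, f integers with 0 ≤ f ≤ e < q, and suppose there exists a resolvable (q², q, 1)-BIBD (i.e., a partition system on q² points with q+1 parallel classes of q blocks of size q, any two blocks from different classes meeting in exactly one point). Remove from the design the union S of e full blocks of one fixed parallel class P₁ together with q-e chosen points from each of f further blocks of P₁, and discard P₁. Then the resulting design on X = X̄ \ S has |X| = (q-e)(q-f), has q parallel classes, every block has size between q-e-f and q-e, and any two blocks from different parallel classes share at most one point. -/
theorem residual_design_from_affine_RBIBD (q e f : ℕ)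
    (hq : ∃ (p n : ℕ), p.Prime ∧ q = p ^ (n + 1))
    (hfe : f ≤ e) (heq : e < q) (hefq : e + f ≤ q)
    (B : Fin (q + 1) → Fin q → Finset (Fin (q ^ 2)))
    (hcard : ∀ l i, (B l i).card = q)
    (hdisj : ∀ l, ∀ i j, i ≠ j → Disjoint (B l i) (B l j))
    (hcover : ∀ l, Finset.univ.biUnion (B l) = Finset.univ)
    (hmeet : ∀ l m, l ≠ m → ∀ i j, ((B l i) ∩ (B m j)).card = 1)
    (T : Fin f → Finset (Fin (q ^ 2)))
    (hTsub : ∀ i, T i ⊆ B 0 ⟨e + i.val, by have := i.isLt; omega⟩)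
    (hTcard : ∀ i, (T i).card = q - e)
    (S : Finset (Fin (q ^ 2)))
    (hS : S = (Finset.univ.biUnion fun i : Fin e =>
                B 0 ⟨i.val, lt_trans i.isLt heq⟩) ∪ Finset.univ.biUnion T) :
    (Finset.univ \ S).card = (q - e) * (q - f) ∧
    (∀ l : Fin (q + 1), l ≠ 0 → ∀ i,
        q - e - f ≤ ((B l i) \ S).card ∧ ((B l i) \ S).card ≤ q - e) ∧
    (∀ l m : Fin (q + 1), l ≠ 0 → m ≠ 0 → l ≠ m → ∀ i j,
        (((B l i) \ S) ∩ ((B m j) \ S)).card ≤ 1) ∧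
    (∀ l : Fin (q + 1), l ≠ 0 →
        Finset.univ.biUnion (fun i => (B l i) \ S) = Finset.univ \ S) := by
  set A : Finset (Fin (q ^ 2)) := Finset.univ.biUnion fun i : Fin e =>
      B 0 ⟨i.val, lt_trans i.isLt heq⟩ with hA
  set C : Finset (Fin (q ^ 2)) := Finset.univ.biUnion T with hC
  -- disjointness of T blocks from the e removed blocks
  have hTdisj : ∀ (i : Fin e) (j : Fin f),
      Disjoint (B 0 ⟨i.val, lt_trans i.isLt heq⟩) (T j) := by
    intro i j
    refine Disjoint.mono_right (hTsub j) (hdisj 0 _ _ ?_)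
    simp only [ne_eq, Fin.mk.injEq]
    omega
  have hACdisj : Disjoint A C := by
    rw [hA, hC, Finset.disjoint_biUnion_left]
    intro i _
    rw [Finset.disjoint_biUnion_right]
    intro j _
    exact hTdisj i j
  have hAcard : A.card = e * q := by
    rw [hA, Finset.card_biUnion]
    · simp [hcard, Finset.sum_const, Finset.card_univ]
    · intro i _ j _ hij
      refine hdisj 0 _ _ ?_
      simp only [ne_eq, Fin.mk.injEq]
      omega
  have hCcard : C.card = f * (q - e) := by
    rw [hC, Finset.card_biUnion]
    · simp [hTcard, Finset.sum_const, Finset.card_univ]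
    · intro i _ j _ hij
      refine Disjoint.mono (hTsub i) (hTsub j) (hdisj 0 _ _ ?_)
      simp only [ne_eq, Fin.mk.injEq]
      have := i.isLt; have := j.isLt
      have : i.val ≠ j.val := fun h => hij (Fin.ext h)
      omega
  have hScard : S.card = e * q + f * (q - e) := by
    rw [hS, Finset.card_union_of_disjoint hACdisj, hAcard, hCcard]
  obtain ⟨d, hd⟩ := Nat.exists_eq_add_of_le hfe
  obtain ⟨a, ha⟩ := Nat.exists_eq_add_of_le heq.le
  have key : q ^ 2 = (e * q + f * (q - e)) + (q - e) * (q - f) := by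
    have h1 : q - e = a := by omega
    have h2 : q - f = d + a := by omega
    rw [h1, h2]
    subst hd; subst ha
    ring
  -- intersection of an off-class block with S
  have hinterA : ∀ (l : Fin (q + 1)), l ≠ 0 → ∀ i, ((B l i) ∩ A).card = e := by
    intro l hl i
    rw [hA, Finset.inter_biUnion, Finset.card_biUnion]
    · simp [hmeet l 0 hl, Finset.card_univ]
    · intro x _ y _ hxy
      refine Disjoint.mono (Finset.inter_subset_right) (Finset.inter_subset_right)
        (hdisj 0 _ _ ?_)
      simp only [ne_eq, Fin.mk.injEq]
      have : x.val ≠ y.val := fun h => hxy (Fin.ext h)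
      omega
  have hinterC : ∀ (l : Fin (q + 1)), l ≠ 0 → ∀ i, ((B l i) ∩ C).card ≤ f := by
    intro l hl i
    rw [hC, Finset.inter_biUnion]
    refine le_trans (Finset.card_biUnion_le) ?_
    have : ∀ j : Fin f, ((B l i) ∩ T j).card ≤ 1 := by
      intro j
      calc ((B l i) ∩ T j).card ≤ ((B l i) ∩ B 0 ⟨e + j.val, by have := j.isLt; omega⟩).card :=
            Finset.card_le_card (Finset.inter_subset_inter Finset.Subset.rfl (hTsub j))
        _ = 1 := hmeet l 0 hl _ _
    calc (∑ j : Fin f, ((B l i) ∩ T j).card) ≤ ∑ _j : Fin f, 1 :=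
          Finset.sum_le_sum fun j _ => this j
      _ = f := by simp
  have hinterS : ∀ (l : Fin (q + 1)), l ≠ 0 → ∀ i,
      e ≤ ((B l i) ∩ S).card ∧ ((B l i) ∩ S).card ≤ e + f := by
    intro l hl i
    constructor
    · have hsub : (B l i) ∩ A ⊆ (B l i) ∩ S := by
        rw [hS]
        exact Finset.inter_subset_inter Finset.Subset.rfl Finset.subset_union_left
      rw [← hinterA l hl i]
      exact Finset.card_le_card hsub
    · rw [hS, Finset.inter_union_distrib_left]
      refine le_trans (Finset.card_union_le _ _) ?_
      exact Nat.add_le_add (le_of_eq (hinterA l hl i)) (hinterC l hl i)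
  have hsd : ∀ (l : Fin (q + 1)) i, ((B l i) \ S).card = q - ((B l i) ∩ S).card := by
    intro l i
    have := Finset.card_inter_add_card_sdiff (B l i) S
    rw [hcard l i] at this
    omega
  refine ⟨?_, ?_, ?_, ?_⟩
  · rw [Finset.card_sdiff_of_subset (Finset.subset_univ S), hScard, Finset.card_univ,
      Fintype.card_fin]
    omega
  · intro l hl i
    have h1 := hinterS l hl i
    rw [hsd l i]
    omega
  · intro l m hl hm hlm i j
    calc (((B l i) \ S) ∩ ((B m j) \ S)).card ≤ ((B l i) ∩ (B m j)).card :=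
          Finset.card_le_card (Finset.inter_subset_inter (Finset.sdiff_subset) (Finset.sdiff_subset))
      _ = 1 := hmeet l m hlm i j
  · intro l hl
    ext x
    simp only [Finset.mem_biUnion, Finset.mem_sdiff, Finset.mem_univ, true_and]
    constructor
    · rintro ⟨i, hx, hxs⟩
      exact hxs
    · intro hxs
      have hx : x ∈ Finset.univ.biUnion (B l) := by
        rw [hcover l]; exact Finset.mem_univ x
      obtain ⟨i, _, hi⟩ := Finset.mem_biUnion.mp hx
      exact ⟨i, hi, hxs⟩
end

section
/- Suppose for each s there exist N(s) mutually orthogonal Latin squares of order s, giving an RBD on s² points with N(s)+2 parallel classes of s blocks of size s where blocks from different classes meet in exactly one point. Let 0 < f ≤ s. Form a design on d = s(s+f) points by: (i) taking the MOLS-derived RBD on s² points minus one parallel class (N(s)+1 classes remain), and (ii) a second disjoint RBD on s·f points with N(s)+1 parallel classes, each of s blocks of size f, in which blocks from different classes meet in at most one point; then take block-wise unions of corresponding blocks. The resulting design has N(s)+1 parallel classes, constant block size s+f, and any two blocks from different parallel classes meet in at least 1 and at most 2 points. -/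
theorem union_design_constant_block_size {α : Type*} [DecidableEq α]
    (s f N : ℕ) (hf : 0 < f) (hfs : f ≤ s)
    (X1 X2 : Finset α) (hX12 : Disjoint X1 X2)
    (hX1 : X1.card = s ^ 2) (hX2 : X2.card = s * f)
    (B : Fin (N + 1) → Fin s → Finset α)
    (hBsub : ∀ l i, B l i ⊆ X1)
    (hBcard : ∀ l i, (B l i).card = s)
    (hBdisj : ∀ l, ∀ i j, i ≠ j → Disjoint (B l i) (B l j))
    (hBcover : ∀ l, Finset.univ.biUnion (B l) = X1)
    (hBmeet : ∀ l m, l ≠ m → ∀ i j, ((B l i) ∩ (B m j)).card = 1)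
    (C : Fin (N + 1) → Fin s → Finset α)
    (hCsub : ∀ l i, C l i ⊆ X2)
    (hCcard : ∀ l i, (C l i).card = f)
    (hCdisj : ∀ l, ∀ i j, i ≠ j → Disjoint (C l i) (C l j))
    (hCcover : ∀ l, Finset.univ.biUnion (C l) = X2)
    (hCmeet : ∀ l m, l ≠ m → ∀ i j, ((C l i) ∩ (C m j)).card ≤ 1) :
    (∀ l i, ((B l i) ∪ (C l i)).card = s + f) ∧
    (∀ l, Finset.univ.biUnion (fun i => (B l i) ∪ (C l i)) = X1 ∪ X2) ∧
    (∀ l m, l ≠ m → ∀ i j,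
        1 ≤ (((B l i) ∪ (C l i)) ∩ ((B m j) ∪ (C m j))).card ∧
        (((B l i) ∪ (C l i)) ∩ ((B m j) ∪ (C m j))).card ≤ 2) := by

  have hdisjBC : ∀ l i m j, Disjoint (B l i) (C m j) := fun l i m j =>
    (hX12.mono (hBsub l i) (hCsub m j))
  refine ⟨fun l i => ?_, fun l => ?_, fun l m hlm i j => ?_⟩
  · rw [Finset.card_union_of_disjoint (hdisjBC l i l i), hBcard, hCcard]
  · ext x
    simp only [Finset.mem_biUnion, Finset.mem_union, Finset.mem_univ, true_and]
    constructor
    · rintro ⟨i, hi | hi⟩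
      · exact Or.inl (hBsub l i hi)
      · exact Or.inr (hCsub l i hi)
    · rintro (hx | hx)
      · rw [← hBcover l] at hx
        obtain ⟨i, _, hi⟩ := Finset.mem_biUnion.mp hx
        exact ⟨i, Or.inl hi⟩
      · rw [← hCcover l] at hx
        obtain ⟨i, _, hi⟩ := Finset.mem_biUnion.mp hx
        exact ⟨i, Or.inr hi⟩
  · have hkey : ((B l i ∪ C l i) ∩ (B m j ∪ C m j))
        = (B l i ∩ B m j) ∪ (C l i ∩ C m j) := by
      ext x
      simp only [Finset.mem_inter, Finset.mem_union]
      constructor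
      · rintro ⟨hl | hl, hm | hm⟩
        · exact Or.inl ⟨hl, hm⟩
        · exact absurd hm (Finset.disjoint_left.mp (hdisjBC l i m j) hl)
        · exact absurd hl (Finset.disjoint_left.mp (hdisjBC m j l i) hm)
        · exact Or.inr ⟨hl, hm⟩
      · rintro (⟨h1, h2⟩ | ⟨h1, h2⟩)
        · exact ⟨Or.inl h1, Or.inl h2⟩
        · exact ⟨Or.inr h1, Or.inr h2⟩
    have hd : Disjoint (B l i ∩ B m j) (C l i ∩ C m j) :=
      (hdisjBC l i l i).mono Finset.inter_subset_left Finset.inter_subset_left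
    rw [hkey, Finset.card_union_of_disjoint hd, hBmeet l m hlm i j]
    exact ⟨Nat.le_add_right 1 _, by have := hCmeet l m hlm i j; omega⟩
end

section
/- Let q be a prime power, 0 < f ≤ e, with q > e, and d = (q-e)(q+f). Given an RBD on d points with r parallel classes, intersection number μ = 1, and all block sizes lying in {q-e, q-e+1, ..., q-e+f, q}, the bases constructed by applying (complex) Hadamard/unitary matrices of matching orders to each block satisfy: for any two basis vectors |ψ⟩, |φ⟩ from bases arising from different parallel classes, |⟨ψ|φ⟩| ≤ 1/(q-e), i.e., |⟨ψ|φ⟩| ≤ β/√d with β = √((q+f)/(q-e)). -/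
/-! Two vectors supported on blocks meeting in at most one point have inner product a sum of
at most one term, and each term has modulus `1 / √(#b₁ #b₂) ≤ 1 / (q - e)` because both blocks
have at least `q - e` points. -/

open Finset

section Overlap

variable {ι 𝕜 : Type*} [Fintype ι] [DecidableEq ι] [RCLike 𝕜]

theorem sum_conj_mul_eq_sum_inter {b₁ b₂ : Finset ι} {ψ φ : ι → 𝕜}
    (hψ : ∀ i ∉ b₁, ψ i = 0) (hφ : ∀ i ∉ b₂, φ i = 0) :
    ∑ i, starRingEnd 𝕜 (ψ i) * φ i = ∑ i ∈ b₁ ∩ b₂, starRingEnd 𝕜 (ψ i) * φ i := by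
  refine (sum_subset (subset_univ _) fun i _ hi => ?_).symm
  by_cases h₁ : i ∈ b₁
  · simp [hφ i fun h₂ => hi (mem_inter.mpr ⟨h₁, h₂⟩)]
  · simp [hψ i h₁]

theorem norm_sum_conj_mul_le_card_inter_mul {b₁ b₂ : Finset ι} {ψ φ : ι → 𝕜} {a c : ℝ}
    (hψ0 : ∀ i ∉ b₁, ψ i = 0) (hφ0 : ∀ i ∉ b₂, φ i = 0)
    (hψ : ∀ i ∈ b₁, ‖ψ i‖ ≤ a) (hφ : ∀ i ∈ b₂, ‖φ i‖ ≤ c) :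
    ‖∑ i, starRingEnd 𝕜 (ψ i) * φ i‖ ≤ #(b₁ ∩ b₂) * (a * c) := by
  rw [sum_conj_mul_eq_sum_inter hψ0 hφ0, ← nsmul_eq_mul]
  refine (norm_sum_le _ _).trans (sum_le_card_nsmul _ _ _ fun i hi => ?_)
  obtain ⟨h₁, h₂⟩ := mem_inter.mp hi
  rw [norm_mul, RCLike.norm_conj]
  exact mul_le_mul (hψ i h₁) (hφ i h₂) (norm_nonneg _) ((norm_nonneg _).trans (hψ i h₁))

end Overlap

theorem one_div_sqrt_mul_one_div_sqrt_le {k m n : ℝ} (hk : 0 < k) (hm : k ≤ m) (hn : k ≤ n) :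
    1 / √m * (1 / √n) ≤ 1 / k := by
  have hsk : 0 < √k := Real.sqrt_pos.mpr hk
  calc 1 / √m * (1 / √n) ≤ 1 / √k * (1 / √k) :=
        mul_le_mul (one_div_le_one_div_of_le hsk (Real.sqrt_le_sqrt hm))
          (one_div_le_one_div_of_le hsk (Real.sqrt_le_sqrt hn)) (by positivity) (by positivity)
    _ = 1 / k := by rw [div_mul_div_comm, one_mul, Real.mul_self_sqrt hk.le]

theorem one_div_eq_sqrt_div_div_sqrt_mul {a b : ℝ} (ha : 0 < a) (hb : 0 < b) :
    1 / a = √(b / a) / √(a * b) := by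
  rw [Real.sqrt_div hb.le, Real.sqrt_mul ha.le]
  field_simp
  rw [Real.sq_sqrt ha.le]

theorem amub_inner_product_bound_general (q e f d : ℕ)
    (heq : e < q)
    (hd : d = (q - e) * (q + f))
    (b₁ b₂ : Finset (Fin d)) (hmeet : (b₁ ∩ b₂).card ≤ 1)
    (hb₁lo : q - e ≤ b₁.card) (hb₂lo : q - e ≤ b₂.card)
    (ψ φ : Fin d → ℂ)
    (hψ0 : ∀ i ∉ b₁, ψ i = 0)
    (hψ : ∀ i ∈ b₁, ‖ψ i‖ = 1 / Real.sqrt (b₁.card))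
    (hφ0 : ∀ i ∉ b₂, φ i = 0)
    (hφ : ∀ i ∈ b₂, ‖φ i‖ = 1 / Real.sqrt (b₂.card)) :
    ‖∑ i, (starRingEnd ℂ) (ψ i) * φ i‖ ≤ 1 / ((q : ℝ) - e) ∧
    1 / ((q : ℝ) - e) = Real.sqrt (((q : ℝ) + f) / ((q : ℝ) - e)) / Real.sqrt d := by
  have hqe : (0 : ℝ) < q - e := sub_pos.mpr (by exact_mod_cast heq)
  have hcast : ((q - e : ℕ) : ℝ) = q - e := Nat.cast_sub heq.le
  have hcard {b : Finset (Fin d)} (hb : q - e ≤ #b) : (q : ℝ) - e ≤ #b := by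
    rw [← hcast]; exact_mod_cast hb
  refine ⟨?_, ?_⟩
  · calc ‖∑ i, (starRingEnd ℂ) (ψ i) * φ i‖
        ≤ #(b₁ ∩ b₂) * (1 / √(#b₁ : ℝ) * (1 / √(#b₂ : ℝ))) :=
          norm_sum_conj_mul_le_card_inter_mul hψ0 hφ0 (fun i hi => (hψ i hi).le)
            (fun i hi => (hφ i hi).le)
      _ ≤ 1 * (1 / ((q : ℝ) - e)) :=
          mul_le_mul (by exact_mod_cast hmeet)
            (one_div_sqrt_mul_one_div_sqrt_le hqe (hcard hb₁lo) (hcard hb₂lo))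
            (by positivity) zero_le_one
      _ = 1 / ((q : ℝ) - e) := one_mul _
  · have hd' : (d : ℝ) = (q - e) * (q + f) := by rw [hd, Nat.cast_mul, hcast]; push_cast; rfl
    rw [hd']
    have hqf : (0 : ℝ) < q + f := by
      linarith [e.cast_nonneg' (α := ℝ), f.cast_nonneg' (α := ℝ)]
    exact one_div_eq_sqrt_div_div_sqrt_mul hqe hqf

theorem amub_inner_product_bound (q e f d : ℕ)
    (hq : ∃ (p n : ℕ), p.Prime ∧ q = p ^ (n + 1))
    (hf : 0 < f) (hfe : f ≤ e) (heq : e < q)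
    (hd : d = (q - e) * (q + f))
    (b₁ b₂ : Finset (Fin d)) (hmeet : (b₁ ∩ b₂).card ≤ 1)
    (hb₁lo : q - e ≤ b₁.card) (hb₂lo : q - e ≤ b₂.card)
    (hb₁hi : b₁.card ≤ q) (hb₂hi : b₂.card ≤ q)
    (ψ φ : Fin d → ℂ)
    (hψ0 : ∀ i ∉ b₁, ψ i = 0)
    (hψ : ∀ i ∈ b₁, ‖ψ i‖ = 1 / Real.sqrt (b₁.card))
    (hφ0 : ∀ i ∉ b₂, φ i = 0)
    (hφ : ∀ i ∈ b₂, ‖φ i‖ = 1 / Real.sqrt (b₂.card)) :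
    ‖∑ i, (starRingEnd ℂ) (ψ i) * φ i‖ ≤ 1 / ((q : ℝ) - e) ∧
    1 / ((q : ℝ) - e) = Real.sqrt (((q : ℝ) + f) / ((q : ℝ) - e)) / Real.sqrt d :=
  amub_inner_product_bound_general q e f d heq hd b₁ b₂ hmeet hb₁lo hb₂lo ψ φ hψ0 hψ hφ0 hφ
end
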